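/- arXiv:2106.09661 — 4 statements merged into one kernel-verified Lean document; each statement's English description precedes it below -/
import Mathlib

section
/- Let F ⊆ ℝ^m be closed, C ⊆ F compact, u, w ∈ S^{m-1} unit vectors, and δ > 0. Then the set K = ⋃{ℓ(p,v) : p ∈ C, v ∈ S^{m-1}, ℓ(p,v) ⊆ F, |⟨v,u⟩| ≥ δ, |⟨v,w⟩| ≥ δ} is closed, where ℓ(p,v) denotes the line through p with direction v. -/
open Set Filter Topology

/-! A line through `p ∈ C` with unit direction `v` is determined by the pair `(p, v)`, and the
admissible pairs form a closed subset of the compact set `C × S^{m-1}`, because each condition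
on `(p, v)` is closed. The union of the lines over a compact set of pairs is closed: along a
sequence `pₙ + sₙ vₙ → x` the parameters `sₙ` stay bounded, since `|sₙ| = ‖xₙ - pₙ‖`, so a
subsequence of `(pₙ, vₙ, sₙ)` converges and its limit exhibits `x` on a limit line. -/

section Lines

variable {E : Type*} [NormedAddCommGroup E] [NormedSpace ℝ E]

theorem isClosed_setOf_forall_add_smul_mem {F : Set E} (hF : IsClosed F) :
    IsClosed {pv : E × E | ∀ s : ℝ, pv.1 + s • pv.2 ∈ F} := by
  simp only [ofPred_forall]
  exact isClosed_iInter fun s => hF.preimage (by fun_prop)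

theorem isClosed_setOf_eq_add_smul_of_isCompact {T : Set (E × E)} (hT : IsCompact T)
    (hT_norm : ∀ pv ∈ T, ‖pv.2‖ = 1) :
    IsClosed {x : E | ∃ pv ∈ T, ∃ s : ℝ, x = pv.1 + s • pv.2} := by
  refine IsSeqClosed.isClosed fun X x hX hXx => ?_
  choose pv hpv s hs using hX
  obtain ⟨R₁, hR₁⟩ := isBounded_iff_forall_norm_le.1 hXx.cauchySeq.isBounded_range
  obtain ⟨R₂, hR₂⟩ := isBounded_iff_forall_norm_le.1 (hT.image continuous_fst).isBounded
  have hs_bound : ∀ n, s n ∈ Icc (-(R₁ + R₂)) (R₁ + R₂) := fun n => by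
    have hs_eq : |s n| = ‖X n - (pv n).1‖ := by
      rw [hs n, add_sub_cancel_left, norm_smul, hT_norm _ (hpv n), mul_one, Real.norm_eq_abs]
    refine abs_le.1 (hs_eq ▸ (norm_sub_le _ _).trans (add_le_add (hR₁ _ ⟨n, rfl⟩) ?_))
    exact hR₂ _ (mem_image_of_mem _ (hpv n))
  obtain ⟨⟨pv₀, s₀⟩, ⟨hpv₀, -⟩, φ, hφ, hlim⟩ :=
    (hT.prod isCompact_Icc).tendsto_subseq (x := fun n => (pv n, s n))
      fun n => ⟨hpv n, hs_bound n⟩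
  have hX_lim : Tendsto (X ∘ φ) atTop (𝓝 (pv₀.1 + s₀ • pv₀.2)) := by
    have hcont : Continuous fun q : (E × E) × ℝ => q.1.1 + q.2 • q.1.2 := by fun_prop
    simpa only [Function.comp_def, ← hs] using (hcont.tendsto _).comp hlim
  exact ⟨pv₀, hpv₀, s₀, tendsto_nhds_unique (hXx.comp hφ.tendsto_atTop) hX_lim⟩

end Lines

theorem stmt5_general (m : ℕ) (F C : Set (EuclideanSpace ℝ (Fin m)))
    (hF : IsClosed F) (hC : IsCompact C)
    (u w : EuclideanSpace ℝ (Fin m))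
    (δ : ℝ) :
    IsClosed {x : EuclideanSpace ℝ (Fin m) |
      ∃ p ∈ C, ∃ v : EuclideanSpace ℝ (Fin m), ‖v‖ = 1 ∧
        {y | ∃ s : ℝ, y = p + s • v} ⊆ F ∧
        δ ≤ |(inner ℝ v u : ℝ)| ∧ δ ≤ |(inner ℝ v w : ℝ)| ∧
        ∃ s : ℝ, x = p + s • v} := by
  set T : Set (EuclideanSpace ℝ (Fin m) × EuclideanSpace ℝ (Fin m)) :=
    (C ×ˢ Metric.sphere 0 1) ∩ ({pv | ∀ s : ℝ, pv.1 + s • pv.2 ∈ F} ∩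
      {pv | δ ≤ |(inner ℝ pv.2 u : ℝ)|} ∩ {pv | δ ≤ |(inner ℝ pv.2 w : ℝ)|})
  have hT : IsCompact T := by
    refine (hC.prod (isCompact_sphere 0 1)).inter_right
      (IsClosed.inter (IsClosed.inter ?_ ?_) ?_)
    · exact isClosed_setOf_forall_add_smul_mem hF
    all_goals exact isClosed_le continuous_const (by fun_prop)
  have hT_norm : ∀ pv ∈ T, ‖pv.2‖ = 1 := fun pv hpv => by simpa using hpv.1.2
  refine (congrArg IsClosed (Set.ext fun x => ?_)).mpr
    (isClosed_setOf_eq_add_smul_of_isCompact hT hT_norm)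
  simp only [T, mem_inter_iff, mem_prod, mem_sphere_zero_iff_norm, mem_ofPred_eq, Prod.exists,
    subset_def, forall_exists_index, forall_eq_apply_imp_iff]
  constructor
  · rintro ⟨p, hp, v, hv, hline, hvu, hvw, hx⟩
    exact ⟨p, v, ⟨⟨hp, hv⟩, ⟨hline, hvu⟩, hvw⟩, hx⟩
  · rintro ⟨p, v, ⟨⟨hp, hv⟩, ⟨hline, hvu⟩, hvw⟩, hx⟩
    exact ⟨p, hp, v, hv, hline, hvu, hvw, hx⟩

/-- Let `F ⊆ ℝ^m` be closed, `C ⊆ F` compact, `u, w` unit vectors and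
`δ > 0`. Then the union of all lines `ℓ(p,v)` with `p ∈ C`, `v` a unit vector,
`ℓ(p,v) ⊆ F`, `|⟨v,u⟩| ≥ δ` and `|⟨v,w⟩| ≥ δ` is closed. -/
theorem stmt5 (m : ℕ) (F C : Set (EuclideanSpace ℝ (Fin m)))
    (hF : IsClosed F) (hC : IsCompact C) (hCF : C ⊆ F)
    (u w : EuclideanSpace ℝ (Fin m)) (hu : ‖u‖ = 1) (hw : ‖w‖ = 1)
    (δ : ℝ) (hδ : 0 < δ) :
    IsClosed {x : EuclideanSpace ℝ (Fin m) |
      ∃ p ∈ C, ∃ v : EuclideanSpace ℝ (Fin m), ‖v‖ = 1 ∧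
        {y | ∃ s : ℝ, y = p + s • v} ⊆ F ∧
        δ ≤ |(inner ℝ v u : ℝ)| ∧ δ ≤ |(inner ℝ v w : ℝ)| ∧
        ∃ s : ℝ, x = p + s • v} :=
  stmt5_general m F C hF hC u w δ
end

section
/- Let T ⊆ ℝ^k be a Borel set with H^α(T) ≤ 1, let l ≥ 1, let A_l ⊆ T be H^α-measurable with a_l = H^α(A_l), and let ε > 0. Define A_l' = {y ∈ A_l : H^α(A_l ∩ closedBall(y, 2^{-l})) ≤ ε·a_l·H^α(T ∩ closedBall(y, 2^{-l}))}. Then H^α(A_l') ≤ c(k)·ε·a_l, where c(k) is the Besicovitch covering constant of ℝ^k. -/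
open MeasureTheory Set Metric
open scoped ENNReal NNReal

/-!
Cover `A'` by the closed balls of radius `2^{-l}` centred at its points. Besicovitch splits them
into `N` disjoint subfamilies. On each subfamily the defining inequality of `A'` sums to
`H^α(A' ∩ ⋃ B) ≤ ε a_l H^α(T ∩ ⋃ B) ≤ ε a_l`, since the balls are disjoint and `H^α(T) ≤ 1`;
summing over the `N` subfamilies gives `H^α(A') ≤ N ε a_l`.
-/

namespace Besicovitch

variable {α : Type*} [MetricSpace α] [MeasurableSpace α] [OpensMeasurableSpace α]

theorem measure_biUnion_inter_closedBall_le {ι : Type*} (μ ν : Measure α) {S : Set α}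
    {c : ι → α} {r : ℝ} {δ : ℝ≥0∞} {s : Set ι} (hs : s.Countable)
    (hdisj : s.PairwiseDisjoint fun j => closedBall (c j) r)
    (h : ∀ j ∈ s, μ (S ∩ closedBall (c j) r) ≤ δ * ν (closedBall (c j) r)) :
    μ (⋃ j ∈ s, S ∩ closedBall (c j) r) ≤ δ * ν univ :=
  calc μ (⋃ j ∈ s, S ∩ closedBall (c j) r)
      ≤ ∑' j : s, μ (S ∩ closedBall (c j) r) := measure_biUnion_le μ hs _
    _ ≤ ∑' j : s, δ * ν (closedBall (c j) r) := ENNReal.tsum_le_tsum fun j => h j j.2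
    _ = δ * ν (⋃ j ∈ s, closedBall (c j) r) := by
      rw [ENNReal.tsum_mul_left, measure_biUnion hs hdisj fun _ _ => measurableSet_closedBall]
    _ ≤ δ * ν univ := by gcongr; exact subset_univ _

theorem measure_le_of_forall_measure_inter_closedBall_le [TopologicalSpace.SeparableSpace α]
    {N : ℕ} {τ : ℝ} (hτ : 1 < τ) (hN : IsEmpty (SatelliteConfig α N τ)) (μ ν : Measure α)
    {S : Set α} {r : ℝ} (hr : 0 < r) {δ : ℝ≥0∞}
    (h : ∀ y ∈ S, μ (S ∩ closedBall y r) ≤ δ * ν (closedBall y r)) :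
    μ S ≤ N * (δ * ν univ) := by
  let q : BallPackage S α :=
    { c := (↑), r := fun _ => r, rpos := fun _ => hr, r_bound := r, r_le := fun _ => le_rfl }
  obtain ⟨s, hdisj, hcov⟩ := exist_disjoint_covering_families hτ hN q
  have hcount (i : Fin N) : (s i).Countable :=
    (hdisj i).countable_of_nonempty_interior fun j _ =>
      ⟨j, ball_subset_interior_closedBall (mem_ball_self hr)⟩
  have hS : S ⊆ ⋃ i, ⋃ j ∈ s i, S ∩ closedBall (j : α) r := by
    intro y hy
    obtain ⟨i, hi⟩ := mem_iUnion.1 (hcov ⟨⟨y, hy⟩, rfl⟩)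
    obtain ⟨j, hj, hyj⟩ := mem_iUnion₂.1 hi
    exact mem_iUnion.2 ⟨i, mem_iUnion₂.2 ⟨j, hj, hy, ball_subset_closedBall hyj⟩⟩
  calc μ S ≤ ∑ i, μ (⋃ j ∈ s i, S ∩ closedBall (j : α) r) :=
        (measure_mono hS).trans (measure_iUnion_fintype_le μ _)
    _ ≤ ∑ _i : Fin N, δ * ν univ := Finset.sum_le_sum fun i _ =>
        measure_biUnion_inter_closedBall_le μ ν (hcount i) (hdisj i) fun j _ => h j j.2
    _ = N * (δ * ν univ) := by simp

end Besicovitch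

/-- There is a constant `c(k)` (the Besicovitch covering constant of
`ℝ^k`) such that: for `0 < α ≤ k`, `T ⊆ ℝ^k` Borel with `H^α(T) ≤ 1`, `l ≥ 1`,
`A_l ⊆ T` an `H^α`-measurable set with `a_l = H^α(A_l)`, and `ε > 0`, the set
`A_l' = {y ∈ A_l : H^α(A_l ∩ B̄(y, 2^{-l})) ≤ ε·a_l·H^α(T ∩ B̄(y, 2^{-l}))}`
satisfies `H^α(A_l') ≤ c(k)·ε·a_l`. -/
theorem stmt9 (k : ℕ) :
    ∃ c : ℝ≥0, 0 < c ∧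
      ∀ (α : ℝ), 0 < α → α ≤ k →
      ∀ T : Set (EuclideanSpace ℝ (Fin k)), MeasurableSet T → μH[α] T ≤ 1 →
      ∀ l : ℕ, 1 ≤ l →
      ∀ A : Set (EuclideanSpace ℝ (Fin k)), A ⊆ T →
        NullMeasurableSet A (μH[α] : Measure (EuclideanSpace ℝ (Fin k))) →
      ∀ ε : ℝ≥0, 0 < ε →
        μH[α] {y ∈ A |
            μH[α] (A ∩ closedBall y (1 / 2 ^ l)) ≤
              (ε : ℝ≥0∞) * μH[α] A * μH[α] (T ∩ closedBall y (1 / 2 ^ l))} ≤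
          (c : ℝ≥0∞) * (ε : ℝ≥0∞) * μH[α] A := by
  obtain ⟨N, τ, hτ, hN⟩ :=
    HasBesicovitchCovering.no_satelliteConfig (α := EuclideanSpace ℝ (Fin k))
  refine ⟨N + 1, by positivity, fun α _ _ T hT hT1 l _ A _ _ ε _ => ?_⟩
  set A' := {y ∈ A | μH[α] (A ∩ closedBall y (1 / 2 ^ l)) ≤
    ε * μH[α] A * μH[α] (T ∩ closedBall y (1 / 2 ^ l))}
  have hA' : ∀ y ∈ A', μH[α] (A' ∩ closedBall y (1 / 2 ^ l)) ≤
      ε * μH[α] A * (μH[α].restrict T) (closedBall y (1 / 2 ^ l)) := fun y hy => by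
    rw [Measure.restrict_apply measurableSet_closedBall, inter_comm _ T]
    exact (measure_mono (inter_subset_inter_left _ (sep_subset _ _))).trans hy.2
  calc μH[α] A' ≤ N * (ε * μH[α] A * (μH[α].restrict T) univ) :=
        Besicovitch.measure_le_of_forall_measure_inter_closedBall_le hτ hN _ _ (by positivity) hA'
    _ ≤ ((N + 1 : ℝ≥0) : ℝ≥0∞) * (ε * μH[α] A * 1) := by
        rw [Measure.restrict_apply_univ]
        gcongr
        push_cast
        exact le_self_add
    _ = ((N + 1 : ℝ≥0) : ℝ≥0∞) * ε * μH[α] A := by ring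
end

section
/- Let g : [0,1] → ℝ² satisfy the dimension-doubling property: dim g(X) = 2·dim X for every X ⊆ [0,1]. Let C = graph(g) = {(t, g(t)) : t ∈ [0,1]} ⊆ ℝ × ℝ². Then for every nonempty subset C' ⊆ C with the Fubini property, the projection of C' to the first coordinate has Hausdorff dimension 0. -/
open Set
open scoped ENNReal

/-! The projection `A` of `C'` is mapped by `g` onto the projection of `C'` to `ℝ²`, a
Lipschitz image of `C'`. Hence `2 · dim A = dim g(A) ≤ dim C' = dim A`, and since `dim A ≤ 1`
is finite, `dim A = 0`. -/

theorem ENNReal.eq_zero_of_two_mul_le {x : ℝ≥0∞} (hx : x ≠ ∞) (h : 2 * x ≤ x) : x = 0 :=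
  le_zero_iff.1 <| (ENNReal.add_le_add_iff_right hx).1 <| by rwa [zero_add, ← two_mul]

theorem image_snd_eq_image_image_fst {α β : Type*} {g : α → β} {s : Set (α × β)}
    (hs : ∀ p ∈ s, p.2 = g p.1) : Prod.snd '' s = g '' (Prod.fst '' s) := by
  rw [image_image]
  exact image_congr hs

theorem dimH_image_image_fst_le {α β : Type*} [EMetricSpace α] [EMetricSpace β] {g : α → β}
    {s : Set (α × β)} (hs : ∀ p ∈ s, p.2 = g p.1) : dimH (g '' (Prod.fst '' s)) ≤ dimH s := by
  rw [← image_snd_eq_image_image_fst hs]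
  exact LipschitzWith.prod_snd.dimH_image_le s

theorem stmt12_general (g : ℝ → ℝ × ℝ)
    (hg : ∀ X ⊆ Icc (0 : ℝ) 1, dimH (g '' X) = 2 * dimH X)
    (C' : Set (ℝ × (ℝ × ℝ)))
    (hsub : C' ⊆ {p : ℝ × (ℝ × ℝ) | p.1 ∈ Icc (0 : ℝ) 1 ∧ p.2 = g p.1})
    (hFubini : dimH C' = dimH (Prod.fst '' C')) :
    dimH (Prod.fst '' C') = 0 := by
  have hproj : Prod.fst '' C' ⊆ Icc 0 1 := image_subset_iff.2 fun p hp => (hsub hp).1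
  refine ENNReal.eq_zero_of_two_mul_le (Real.dimH_ne_top _) ?_
  calc 2 * dimH (Prod.fst '' C') = dimH (g '' (Prod.fst '' C')) := (hg _ hproj).symm
    _ ≤ dimH C' := dimH_image_image_fst_le fun p hp => (hsub hp).2
    _ = dimH (Prod.fst '' C') := hFubini

/-- Let `g : [0,1] → ℝ²` have the dimension-doubling property
`dim g(X) = 2 · dim X` for every `X ⊆ [0,1]`, and let `C = graph g ⊆ ℝ × ℝ²`.
Then every nonempty `C' ⊆ C` with the Fubini property (since `C'` is contained in a
graph, all vertical sections are at most singletons, so the Fubini property reads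
`dim C' = dim proj_ℝ C'`) has `dim proj_ℝ C' = 0`. -/
theorem stmt12 (g : ℝ → ℝ × ℝ)
    (hg : ∀ X ⊆ Icc (0 : ℝ) 1, dimH (g '' X) = 2 * dimH X)
    (C' : Set (ℝ × (ℝ × ℝ))) (hne : C'.Nonempty)
    (hsub : C' ⊆ {p : ℝ × (ℝ × ℝ) | p.1 ∈ Icc (0 : ℝ) 1 ∧ p.2 = g p.1})
    (hFubini : dimH C' = dimH (Prod.fst '' C')) :
    dimH (Prod.fst '' C') = 0 :=
  stmt12_general g hg C' hsub hFubini
end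

section
/- Let 1 ≤ k < m, and let E be a nonempty collection of non-vertical k-dimensional affine subspaces of ℝ^m such that B = ⋃_{P ∈ E} P is Borel and, for Lebesgue-almost every t ∈ ℝ^k, dim B_t ≥ r where B_t = {x ∈ ℝ^{m-k} : (t,x) ∈ B}. Suppose moreover that every set B' ⊆ ℝ^m with H^k(B' ∩ P) > 0 for each P ∈ E satisfies dim B' ≥ k + dim E and that dim(⋃_{P∈E} P) ≤ k + dim E with dim E ≤ 1. If additionally ess-sup over t ∈ ℝ^k of dim B_t is at least dim E, then dim B = k + ess-sup_t dim B_t; that is, B has the Fubini property. -/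
/-!
Every plane `P ∈ E` lies in `B` and, being a graph over `ℝ^k`, has positive `k`-dimensional
Hausdorff measure, so the hypothesis on `E` gives `dim B ≥ k + dim E`, whence
`dim B = k + dim E`. Conversely, a slicing inequality: if `H^{k+s}(A) = 0`, cover `A` by sets
`U_i` with `∑ diam(U_i)^{k+s}` small; the function `t ↦ ∑ diam(U_i)^s · 1[t near π(U_i)]`
dominates the `s`-covering sum of the slice `A_t` and has integral `≲ ∑ diam(U_i)^{k+s}`, so by
Fatou `H^s(A_t) = 0` for a.e. `t`. Hence a.e. slice of `B` has dimension at most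
`dim B - k = dim E`, i.e. the essential supremum `β` is at most `dim E`, and `β = dim E`.
-/

open MeasureTheory Set Filter Metric Module
open scoped ENNReal NNReal Topology

lemma exists_cover_tsum_ediam_rpow_lt {X : Type*} [EMetricSpace X] [MeasurableSpace X]
    [BorelSpace X] {d : ℝ} (hd : 0 < d) {s : Set X} {r ε : ℝ≥0∞} (hr : 0 < r)
    (hs : μH[d] s < ε) :
    ∃ U : ℕ → Set X, s ⊆ ⋃ i, U i ∧ (∀ i, ediam (U i) ≤ r) ∧ ∑' i, ediam (U i) ^ d < ε := by
  rw [Measure.hausdorffMeasure_apply] at hs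
  obtain ⟨U, hU⟩ := iInf_lt_iff.1 ((le_iSup₂ (f := fun (r : ℝ≥0∞) (_ : 0 < r) =>
    ⨅ (t : ℕ → Set X) (_ : s ⊆ ⋃ n, t n) (_ : ∀ n, ediam (t n) ≤ r),
      ∑' n, ⨆ _ : (t n).Nonempty, ediam (t n) ^ d) r hr).trans_lt hs)
  obtain ⟨hcover, hU⟩ := iInf_lt_iff.1 hU
  obtain ⟨hdiam, hU⟩ := iInf_lt_iff.1 hU
  refine ⟨U, hcover, hdiam, (ENNReal.tsum_le_tsum fun i => ?_).trans_lt hU⟩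
  rcases (U i).eq_empty_or_nonempty with h | h
  · simp [h, ENNReal.zero_rpow_of_pos hd]
  · exact le_iSup (fun _ : (U i).Nonempty => ediam (U i) ^ d) h

lemma ediam_slice_le {X Y : Type*} [PseudoEMetricSpace X] [PseudoEMetricSpace Y]
    (U : Set (X × Y)) (t : X) : ediam {y | (t, y) ∈ U} ≤ ediam U :=
  ediam_le fun y hy y' hy' => by
    simpa [Prod.edist_eq] using edist_le_ediam_of_mem (s := U) hy hy'

lemma sSup_setOf_measure_lt_ne_zero_le {α β : Type*} [MeasurableSpace α]
    [CompleteLinearOrder β] {μ : Measure α} {f : α → β} {c : β} (h : ∀ᵐ t ∂μ, f t ≤ c) :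
    sSup {q | μ {t | q < f t} ≠ 0} ≤ c :=
  sSup_le fun _ hq => not_lt.1 fun hcq =>
    hq (measure_mono_null (fun _ ht => not_le.2 (hcq.trans ht)) (ae_iff.1 h))

section Product

variable {X Y : Type*} [NormedAddCommGroup X] [NormedSpace ℝ X] [FiniteDimensional ℝ X]
  [MeasurableSpace X] [BorelSpace X] [EMetricSpace Y]

section Slicing

variable (μ : Measure X) [μ.IsAddHaarMeasure]

lemma exists_measurable_ge_ediam_slice_rpow {s : ℝ} (hs : 0 < s) (U : Set (X × Y))
    (hU : ediam U ≠ ∞) :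
    ∃ g : X → ℝ≥0∞, Measurable g ∧ (∀ t, ediam {y | (t, y) ∈ U} ^ s ≤ g t) ∧
      ∫⁻ t, g t ∂μ ≤ μ (closedBall 0 1) * ediam U ^ ((finrank ℝ X : ℝ) + s) := by
  rcases U.eq_empty_or_nonempty with rfl | ⟨⟨c, y₀⟩, hc⟩
  · exact ⟨0, measurable_const, fun t => by simp [ENNReal.zero_rpow_of_pos hs], by simp⟩
  set D := ediam U
  refine ⟨(closedBall c D.toReal).indicator fun _ => D ^ s,
    measurable_const.indicator measurableSet_closedBall, fun t => ?_, ?_⟩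
  · rcases eq_empty_or_nonempty {y | (t, y) ∈ U} with h | ⟨y, hy⟩
    · simp [h, ENNReal.zero_rpow_of_pos hs]
    have ht : t ∈ closedBall c D.toReal := by
      rw [mem_closedBall, dist_edist]
      refine ENNReal.toReal_mono hU ?_
      calc edist t c ≤ edist (t, y) (c, y₀) := by simp [Prod.edist_eq]
        _ ≤ D := edist_le_ediam_of_mem hy hc
    rw [indicator_of_mem ht]
    exact ENNReal.rpow_le_rpow (ediam_slice_le U t) hs.le
  · rw [lintegral_indicator_const measurableSet_closedBall,
      Measure.addHaar_closedBall' μ _ ENNReal.toReal_nonneg,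
      ENNReal.ofReal_pow ENNReal.toReal_nonneg, ENNReal.ofReal_toReal hU,
      ENNReal.rpow_add_of_nonneg _ _ (Nat.cast_nonneg _) hs.le, ENNReal.rpow_natCast]
    exact le_of_eq (by ring)

variable [MeasurableSpace Y] [BorelSpace Y]

lemma ae_hausdorffMeasure_slice_eq_zero {s : ℝ} (hs : 0 < s) {A : Set (X × Y)}
    (hA : μH[(finrank ℝ X : ℝ) + s] A = 0) :
    ∀ᵐ t ∂μ, μH[s] {y | (t, y) ∈ A} = 0 := by
  set ε : ℕ → ℝ≥0∞ := fun j => 2⁻¹ ^ j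
  have hε_pos : ∀ j, 0 < ε j := fun j => ENNReal.pow_pos (ENNReal.inv_pos.2 ENNReal.ofNat_ne_top) j
  have hε_ne_top : ∀ j, ε j ≠ ∞ := fun j => ENNReal.pow_ne_top (by simp)
  have hε : Tendsto ε atTop (𝓝 0) :=
    ENNReal.tendsto_pow_atTop_nhds_zero_of_lt_one (ENNReal.inv_lt_one.2 ENNReal.one_lt_two)
  choose U hUA hUdiam hUsum using fun j =>
    exists_cover_tsum_ediam_rpow_lt (by positivity) (hε_pos j) (hA ▸ hε_pos j)
  have hUfin : ∀ j i, ediam (U j i) ≠ ∞ := fun j i =>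
    ne_top_of_le_ne_top (hε_ne_top j) (hUdiam j i)
  choose g hg_meas hg_ge hg_int using fun j i =>
    exists_measurable_ge_ediam_slice_rpow μ hs (U j i) (hUfin j i)
  set G : ℕ → X → ℝ≥0∞ := fun j t => ∑' i, g j i t
  have hG_meas : ∀ j, Measurable (G j) := fun j => Measurable.tsum (hg_meas j)
  set C := μ (closedBall 0 1)
  have hG_int : ∀ j, ∫⁻ t, G j t ∂μ ≤ C * ε j := fun j => calc
    ∫⁻ t, G j t ∂μ = ∑' i, ∫⁻ t, g j i t ∂μ :=
      lintegral_tsum fun i => (hg_meas j i).aemeasurable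
    _ ≤ ∑' i, C * ediam (U j i) ^ ((finrank ℝ X : ℝ) + s) := ENNReal.tsum_le_tsum (hg_int j)
    _ = C * ∑' i, ediam (U j i) ^ ((finrank ℝ X : ℝ) + s) := ENNReal.tsum_mul_left
    _ ≤ C * ε j := mul_le_mul_right (hUsum j).le C
  have hliminf : ∀ᵐ t ∂μ, liminf (fun j => G j t) atTop = 0 := by
    refine (lintegral_eq_zero_iff (Measurable.liminf hG_meas)).1 (le_antisymm ?_ zero_le)
    calc ∫⁻ t, liminf (fun j => G j t) atTop ∂μ ≤ liminf (fun j => ∫⁻ t, G j t ∂μ) atTop :=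
          lintegral_liminf_le hG_meas
      _ ≤ liminf (fun j => C * ε j) atTop := liminf_le_liminf (Eventually.of_forall hG_int)
      _ = 0 := by
        rw [(ENNReal.Tendsto.const_mul hε (.inr measure_closedBall_lt_top.ne)).liminf_eq,
          mul_zero]
  filter_upwards [hliminf] with t ht
  refine le_antisymm ?_ zero_le
  calc μH[s] {y | (t, y) ∈ A}
      ≤ liminf (fun j => ∑' i, ediam {y | (t, y) ∈ U j i} ^ s) atTop :=
        Measure.hausdorffMeasure_le_liminf_tsum s _ ε hε _
          (Eventually.of_forall fun j i => (ediam_slice_le _ t).trans (hUdiam j i))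
          (Eventually.of_forall fun j y hy => by simpa using hUA j hy)
    _ ≤ liminf (fun j => G j t) atTop :=
        liminf_le_liminf (Eventually.of_forall fun j =>
          ENNReal.tsum_le_tsum fun i => hg_ge j i t)
    _ = 0 := ht

lemma ae_dimH_slice_le (A : Set (X × Y)) :
    ∀ᵐ t ∂μ, dimH {y | (t, y) ∈ A} ≤ dimH A - finrank ℝ X := by
  set D := dimH A - finrank ℝ X
  have hq : ∀ q : ℚ, ∀ᵐ t ∂μ, D < Real.toNNReal q →
      dimH {y | (t, y) ∈ A} ≤ Real.toNNReal q := by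
    intro q
    by_cases hDq : D < Real.toNNReal q
    · have hq_pos : 0 < (Real.toNNReal q : ℝ) := by
        exact_mod_cast (zero_le.trans_lt hDq : (0 : ℝ≥0∞) < Real.toNNReal q)
      have hA : dimH A < ((finrank ℝ X + Real.toNNReal q : ℝ≥0) : ℝ≥0∞) := by
        push_cast
        exact ENNReal.lt_add_of_sub_lt_left (.inr (ENNReal.natCast_ne_top _)) hDq
      have hA0 := hausdorffMeasure_of_dimH_lt hA
      push_cast at hA0
      filter_upwards [ae_hausdorffMeasure_slice_eq_zero μ hq_pos hA0] with t ht _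
      exact dimH_le_of_hausdorffMeasure_ne_top (ht ▸ ENNReal.zero_ne_top)
    · exact Eventually.of_forall fun _ h => absurd h hDq
  filter_upwards [ae_all_iff.2 hq] with t ht
  by_contra! h
  obtain ⟨q, -, hDq, hqt⟩ := ENNReal.lt_iff_exists_rat_btwn.1 h
  exact (ht q hDq).not_gt hqt

end Slicing

variable [MeasurableSpace Y] [BorelSpace Y]

lemma hausdorffMeasure_univ_le_graph {d : ℝ} (hd : 0 ≤ d) (f : X → Y) :
    μH[d] (univ : Set X) ≤ μH[d] {p : X × Y | p.2 = f p.1} := by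
  have hfst : Prod.fst '' {p : X × Y | p.2 = f p.1} = univ :=
    eq_univ_of_forall fun t => ⟨(t, f t), rfl, rfl⟩
  simpa [hfst] using LipschitzWith.prod_fst.hausdorffMeasure_image_le hd {p : X × Y | p.2 = f p.1}

lemma hausdorffMeasure_graph_pos (f : X → Y) :
    0 < μH[finrank ℝ X] {p : X × Y | p.2 = f p.1} :=
  (Measure.measure_univ_pos.2 (NeZero.ne _)).trans_le
    (hausdorffMeasure_univ_le_graph (Nat.cast_nonneg _) f)

end Product

theorem stmt14_general (k n : ℕ)
    (E : Set (Set (EuclideanSpace ℝ (Fin k) × EuclideanSpace ℝ (Fin n))))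
    (hgraph : ∀ P ∈ E, ∃ f : EuclideanSpace ℝ (Fin k) →ᵃ[ℝ] EuclideanSpace ℝ (Fin n),
      P = {p | p.2 = f p.1})
    (B : Set (EuclideanSpace ℝ (Fin k) × EuclideanSpace ℝ (Fin n)))
    (hBdef : B = ⋃₀ E)
    (e : ℝ≥0∞)
    (hlow : ∀ B' : Set (EuclideanSpace ℝ (Fin k) × EuclideanSpace ℝ (Fin n)),
      (∀ P ∈ E, 0 < μH[(k : ℝ)] (B' ∩ P)) → (k : ℝ≥0∞) + e ≤ dimH B')
    (hup : dimH B ≤ (k : ℝ≥0∞) + e)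
    (β : ℝ≥0∞)
    (hβdef : β = sSup {q : ℝ≥0∞ |
      (volume : Measure (EuclideanSpace ℝ (Fin k)))
        {t | q < dimH {x : EuclideanSpace ℝ (Fin n) | (t, x) ∈ B}} ≠ 0})
    (hβe : e ≤ β) :
    dimH B = (k : ℝ≥0∞) + β := by
  have hBP : ∀ P ∈ E, 0 < μH[(k : ℝ)] (B ∩ P) := by
    intro P hP
    obtain ⟨f, rfl⟩ := hgraph P hP
    rw [inter_eq_self_of_subset_right (hBdef ▸ subset_sUnion_of_mem hP)]
    simpa using hausdorffMeasure_graph_pos (Y := EuclideanSpace ℝ (Fin n)) f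
  have hdim : dimH B = k + e := le_antisymm hup (hlow B hBP)
  have hβ_le : β ≤ e := by
    have hslice := ae_dimH_slice_le (Y := EuclideanSpace ℝ (Fin n)) volume B
    rw [hdim, finrank_euclideanSpace_fin,
      ENNReal.add_sub_cancel_left (ENNReal.natCast_ne_top k)] at hslice
    exact hβdef ▸ sSup_setOf_measure_lt_ne_zero_le hslice
  rw [hdim, le_antisymm hβ_le hβe]

/-- Let `E` be a nonempty family of non-vertical `k`-dimensional affine
subspaces of `ℝ^m = ℝ^k × ℝ^{m-k}` (each such subspace being the graph of an affine map
`ℝ^k → ℝ^{m-k}`), with `B = ⋃ E` Borel and `dim B_t ≥ dim E` for Lebesgue-a.e. `t`.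
Suppose every `B'` with `H^k(B' ∩ P) > 0` for all `P ∈ E` satisfies
`dim B' ≥ k + dim E`, that `dim B ≤ k + dim E` with `dim E ≤ 1`, and that the essential
supremum `β` of `t ↦ dim B_t` is `≥ dim E`. Then `dim B = k + β` (the Fubini property).
Here `e` plays the role of `dim E`. -/
theorem stmt14 (k n : ℕ) (hk : 1 ≤ k) (hn : 1 ≤ n)
    (E : Set (Set (EuclideanSpace ℝ (Fin k) × EuclideanSpace ℝ (Fin n))))
    (hEne : E.Nonempty)
    (hgraph : ∀ P ∈ E, ∃ f : EuclideanSpace ℝ (Fin k) →ᵃ[ℝ] EuclideanSpace ℝ (Fin n),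
      P = {p | p.2 = f p.1})
    (B : Set (EuclideanSpace ℝ (Fin k) × EuclideanSpace ℝ (Fin n)))
    (hBdef : B = ⋃₀ E) (hBmeas : MeasurableSet B)
    (e : ℝ≥0∞) (he : e ≤ 1)
    (hae : ∀ᵐ t ∂(volume : Measure (EuclideanSpace ℝ (Fin k))),
      e ≤ dimH {x : EuclideanSpace ℝ (Fin n) | (t, x) ∈ B})
    (hlow : ∀ B' : Set (EuclideanSpace ℝ (Fin k) × EuclideanSpace ℝ (Fin n)),
      (∀ P ∈ E, 0 < μH[(k : ℝ)] (B' ∩ P)) → (k : ℝ≥0∞) + e ≤ dimH B')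
    (hup : dimH B ≤ (k : ℝ≥0∞) + e)
    (β : ℝ≥0∞)
    (hβdef : β = sSup {q : ℝ≥0∞ |
      (volume : Measure (EuclideanSpace ℝ (Fin k)))
        {t | q < dimH {x : EuclideanSpace ℝ (Fin n) | (t, x) ∈ B}} ≠ 0})
    (hβe : e ≤ β) :
    dimH B = (k : ℝ≥0∞) + β :=
  stmt14_general k n E hgraph B hBdef e hlow hup β hβdef hβe
end
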